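/- Let h(x) = x^β·l(x) with β > 0 and l(x) = exp(∫₁^x ε(u)/u du) where ε is twice differentiable, ε(x) → 0, lim sup x|ε'(x)| < ∞, and lim sup x²|ε''(x)| < ∞. Then there exists a constant Q₁ > 0 such that |h'''(x)| ≤ Q₁·h(x)/x³ for all sufficiently large x. -/

import Mathlib

set_option maxHeartbeats 1000000

open Filter Set

noncomputable def LL (ε : ℝ → ℝ) : ℝ → ℝ := fun x => ∫ u in (1:ℝ)..x, ε u / u

lemma hasDerivAt_LL {ε : ℝ → ℝ} (hε : Continuous ε) {x : ℝ} (hx : 1 < x) :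
    HasDerivAt (LL ε) (ε x / x) x := by
  have hx0 : (0:ℝ) < x := lt_trans one_pos hx
  have hf : ContinuousOn (fun u : ℝ => ε u / u) (Set.Ioi 0) :=
    ContinuousOn.div hε.continuousOn continuousOn_id (fun u hu => ne_of_gt hu)
  have hsub : Set.uIcc (1:ℝ) x ⊆ Set.Ioi 0 := by
    rw [Set.uIcc_of_le hx.le]; intro u hu; exact lt_of_lt_of_le one_pos hu.1
  apply intervalIntegral.integral_hasDerivAt_right
  · exact (hf.mono hsub).intervalIntegrable
  · exact hf.stronglyMeasurableAtFilter isOpen_Ioi x hx0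
  · exact (hf x hx0).continuousAt (isOpen_Ioi.mem_nhds hx0)

noncomputable def EE (ε : ℝ → ℝ) : ℝ → ℝ := fun x => Real.exp (LL ε x)

noncomputable def P2 (β : ℝ) (ε : ℝ → ℝ) : ℝ → ℝ := fun x =>
  (β - 1) * (β + ε x) + x * deriv ε x + (β + ε x) * ε x

noncomputable def P3 (β : ℝ) (ε : ℝ → ℝ) : ℝ → ℝ := fun x =>
  (β - 2) * P2 β ε x
    + ((β - 1) * (x * deriv ε x) + (x * deriv ε x + x ^ 2 * deriv (deriv ε) x)
        + ((x * deriv ε x) * ε x + (β + ε x) * (x * deriv ε x)))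
    + P2 β ε x * ε x

noncomputable def G0 (β : ℝ) (ε : ℝ → ℝ) : ℝ → ℝ := fun x => x ^ β * EE ε x
noncomputable def G1 (β : ℝ) (ε : ℝ → ℝ) : ℝ → ℝ := fun x => x ^ (β - 1) * (β + ε x) * EE ε x
noncomputable def G2 (β : ℝ) (ε : ℝ → ℝ) : ℝ → ℝ := fun x => x ^ (β - 2) * P2 β ε x * EE ε x
noncomputable def G3 (β : ℝ) (ε : ℝ → ℝ) : ℝ → ℝ := fun x => x ^ (β - 3) * P3 β ε x * EE ε x

section derivs
variable {β : ℝ} {ε : ℝ → ℝ} {x : ℝ}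

lemma hasDerivAt_EE (hε : Continuous ε) (hx : 1 < x) :
    HasDerivAt (EE ε) (ε x / x * EE ε x) x := by
  have := (hasDerivAt_LL hε hx).exp
  rw [show EE ε = fun x => Real.exp (LL ε x) from rfl]
  simpa [mul_comm] using this

lemma rpow_shift (hx : 1 < x) (p : ℝ) : x ^ (p + 1) = x ^ p * x :=
  Real.rpow_add_one (by positivity) p

lemma hasDerivAt_G0 (hε : Continuous ε) (hx : 1 < x) :
    HasDerivAt (G0 β ε) (G1 β ε x) x := by
  have hx0 : (0:ℝ) < x := lt_trans one_pos hx
  have H := (Real.hasDerivAt_rpow_const (p := β) (Or.inl hx0.ne')).mul (hasDerivAt_EE hε hx)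
  have e1 : x ^ β = x ^ (β - 1) * x := by
    rw [← rpow_shift hx (β - 1)]; congr 1; ring
  convert H using 1
  · rfl
  · rfl
  · rfl
  simp only [G1]
  rw [e1]
  field_simp

lemma hasDerivAt_G1 (hε₁ : Differentiable ℝ ε) (hx : 1 < x) :
    HasDerivAt (G1 β ε) (G2 β ε x) x := by
  have hx0 : (0:ℝ) < x := lt_trans one_pos hx
  have hεd : HasDerivAt (fun y => β + ε y) (deriv ε x) x := by
    exact (hε₁ x).hasDerivAt.const_add β
  have H := ((Real.hasDerivAt_rpow_const (p := β - 1) (Or.inl hx0.ne')).mul hεd).mul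
    (hasDerivAt_EE hε₁.continuous hx)
  have e1 : x ^ (β - 1) = x ^ (β - 2) * x := by
    rw [← rpow_shift hx (β - 2)]; congr 1; ring
  convert H using 1
  · rfl
  · rfl
  · rfl
  simp only [G2, P2, Pi.mul_apply]
  rw [show β - 1 - 1 = β - 2 by ring, e1]
  field_simp

lemma hasDerivAt_G2 (hε₁ : Differentiable ℝ ε) (hε₂ : Differentiable ℝ (deriv ε))
    (hx : 1 < x) : HasDerivAt (G2 β ε) (G3 β ε x) x := by
  have hx0 : (0:ℝ) < x := lt_trans one_pos hx
  have hP2 : HasDerivAt (P2 β ε)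
      ((β - 1) * deriv ε x + (deriv ε x + x * deriv (deriv ε) x)
        + (deriv ε x * ε x + (β + ε x) * deriv ε x)) x := by
    have h1 : HasDerivAt (fun y => (β - 1) * (β + ε y)) ((β - 1) * deriv ε x) x := by
      simpa using ((hasDerivAt_const x β).add (hε₁ x).hasDerivAt).const_mul (β - 1)
    have h2 : HasDerivAt (fun y => y * deriv ε y)
        (1 * deriv ε x + x * deriv (deriv ε) x) x :=
      (hasDerivAt_id x).mul (hε₂ x).hasDerivAt
    have h3 : HasDerivAt (fun y => (β + ε y) * ε y)
        (deriv ε x * ε x + (β + ε x) * deriv ε x) x := by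
      exact ((hε₁ x).hasDerivAt.const_add β).mul (hε₁ x).hasDerivAt
    have := (h1.add h2).add h3
    convert this using 1
    · rfl
    · rfl
    · rfl
    ring
  have H := ((Real.hasDerivAt_rpow_const (p := β - 2) (Or.inl hx0.ne')).mul hP2).mul
    (hasDerivAt_EE hε₁.continuous hx)
  have e1 : x ^ (β - 2) = x ^ (β - 3) * x := by
    rw [← rpow_shift hx (β - 3)]; congr 1; ring
  convert H using 1
  · rfl
  · rfl
  · rfl
  simp only [G3, P3, P2, Pi.mul_apply]
  rw [show β - 2 - 1 = β - 3 by ring, e1]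
  field_simp

end derivs

theorem third_deriv_bound_regular_variation
    (β : ℝ) (hβ : 0 < β) (h l ε : ℝ → ℝ)
    (hε₁ : Differentiable ℝ ε) (hε₂ : Differentiable ℝ (deriv ε))
    (hl : ∀ x, 1 ≤ x → l x = Real.exp (∫ u in (1:ℝ)..x, ε u / u))
    (hh : ∀ x, 0 < x → h x = x ^ β * l x)
    (hε0 : Tendsto ε atTop (nhds 0))
    (hε1 : ∃ C : ℝ, ∀ᶠ x in atTop, x * |deriv ε x| ≤ C)
    (hε2 : ∃ C : ℝ, ∀ᶠ x in atTop, x ^ 2 * |deriv (deriv ε) x| ≤ C) :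
    ∃ Q₁ : ℝ, 0 < Q₁ ∧
      ∀ᶠ x in atTop, |deriv (deriv (deriv h)) x| ≤ Q₁ * h x / x ^ 3 := by
  obtain ⟨C₁, hC₁⟩ := hε1
  obtain ⟨C₂, hC₂⟩ := hε2
  set D₁ : ℝ := max C₁ 0 with hD₁def
  set D₂ : ℝ := max C₂ 0 with hD₂def
  have hD₁ : 0 ≤ D₁ := le_max_right _ _
  have hD₂ : 0 ≤ D₂ := le_max_right _ _
  set A : ℝ := (β + 1) * (β + 1) + D₁ + (β + 1) with hAdef
  have hA : 0 ≤ A := by nlinarith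
  set Q₁ : ℝ := (β + 2) * A + ((β + 1) * D₁ + (D₁ + D₂) + (D₁ + (β + 1) * D₁)) + A + 1
    with hQdef
  have hQpos : 0 < Q₁ := by nlinarith
  refine ⟨Q₁, hQpos, ?_⟩
  -- eventual equality of h with G0
  have hE0 : ∀ x ∈ Set.Ioi (1:ℝ), h =ᶠ[nhds x] G0 β ε := by
    intro x hx
    have : Set.EqOn h (G0 β ε) (Set.Ioi 1) := by
      intro y hy
      have hy1 : (1:ℝ) < y := hy
      rw [hh y (lt_trans one_pos hy1), hl y hy1.le]
      rfl
    exact this.eventuallyEq_of_mem (isOpen_Ioi.mem_nhds hx)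
  have hE1 : ∀ x ∈ Set.Ioi (1:ℝ), deriv h =ᶠ[nhds x] G1 β ε := by
    intro x hx
    refine ((hE0 x hx).deriv).trans ?_
    filter_upwards [isOpen_Ioi.mem_nhds hx] with y hy
    exact (hasDerivAt_G0 hε₁.continuous hy).deriv
  have hE2 : ∀ x ∈ Set.Ioi (1:ℝ), deriv (deriv h) =ᶠ[nhds x] G2 β ε := by
    intro x hx
    refine ((hE1 x hx).deriv).trans ?_
    filter_upwards [isOpen_Ioi.mem_nhds hx] with y hy
    exact (hasDerivAt_G1 hε₁ hy).deriv
  have hE3 : ∀ x ∈ Set.Ioi (1:ℝ), deriv (deriv (deriv h)) x = G3 β ε x := by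
    intro x hx
    have := ((hE2 x hx).deriv).eq_of_nhds
    rw [this]
    exact (hasDerivAt_G2 hε₁ hε₂ hx).deriv
  have haev : ∀ᶠ x in atTop, |ε x| ≤ 1 := by
    have := hε0.eventually (Metric.ball_mem_nhds (0:ℝ) one_pos)
    filter_upwards [this] with x hx
    simp only [Metric.mem_ball, Real.dist_eq, sub_zero] at hx
    exact hx.le
  filter_upwards [eventually_gt_atTop (1:ℝ), haev, hC₁, hC₂] with x hx ha hb hc
  have hx0 : (0:ℝ) < x := lt_trans one_pos hx
  rw [hE3 x hx]
  -- abbreviations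
  set a : ℝ := ε x with hadef
  set b : ℝ := x * deriv ε x with hbdef
  set c : ℝ := x ^ 2 * deriv (deriv ε) x with hcdef
  have hb' : |b| ≤ D₁ := by
    rw [hbdef, abs_mul, abs_of_pos hx0]
    exact le_trans hb (le_max_left _ _)
  have hc' : |c| ≤ D₂ := by
    rw [hcdef, abs_mul, abs_of_pos (by positivity : (0:ℝ) < x ^ 2)]
    exact le_trans hc (le_max_left _ _)
  have hab : |β + a| ≤ β + 1 := by
    rw [abs_le] at ha ⊢
    constructor <;> linarith [ha.1, ha.2]
  have hbm1 : |β - 1| ≤ β + 1 := by rw [abs_le]; constructor <;> linarith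
  have hbm2 : |β - 2| ≤ β + 2 := by rw [abs_le]; constructor <;> linarith
  have hP2b : |P2 β ε x| ≤ A := by
    have t : |P2 β ε x| ≤ |(β - 1) * (β + a)| + |b| + |(β + a) * a| := by
      simp only [P2, ← hadef, ← hbdef]
      exact abs_add_three _ _ _
    have m1 : |(β - 1) * (β + a)| ≤ (β + 1) * (β + 1) := by
      rw [abs_mul]; exact mul_le_mul hbm1 hab (abs_nonneg _) (by linarith)
    have m2 : |(β + a) * a| ≤ (β + 1) * 1 := by
      rw [abs_mul]; exact mul_le_mul hab ha (abs_nonneg _) (by linarith)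
    simp only [hAdef]
    linarith
  have hP3b : |P3 β ε x| ≤ Q₁ := by
    have t : |P3 β ε x| ≤ |(β - 2) * P2 β ε x|
        + |(β - 1) * b + (b + c) + (b * a + (β + a) * b)| + |P2 β ε x * a| := by
      simp only [P3, ← hadef, ← hbdef, ← hcdef]
      exact abs_add_three _ _ _
    have tmid : |(β - 1) * b + (b + c) + (b * a + (β + a) * b)|
        ≤ |(β - 1) * b| + |b + c| + |b * a + (β + a) * b| := abs_add_three _ _ _
    have m1 : |(β - 2) * P2 β ε x| ≤ (β + 2) * A := by
      rw [abs_mul]; exact mul_le_mul hbm2 hP2b (abs_nonneg _) (by linarith)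
    have m2 : |(β - 1) * b| ≤ (β + 1) * D₁ := by
      rw [abs_mul]; exact mul_le_mul hbm1 hb' (abs_nonneg _) (by linarith)
    have m3 : |b + c| ≤ D₁ + D₂ := (abs_add_le _ _).trans (by linarith)
    have m4 : |b * a + (β + a) * b| ≤ D₁ + (β + 1) * D₁ := by
      refine (abs_add_le _ _).trans ?_
      have e1 : |b * a| ≤ D₁ * 1 := by
        rw [abs_mul]; exact mul_le_mul hb' ha (abs_nonneg _) hD₁
      have e2 : |(β + a) * b| ≤ (β + 1) * D₁ := by
        rw [abs_mul]; exact mul_le_mul hab hb' (abs_nonneg _) (by linarith : (0:ℝ) ≤ β + 1)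
      linarith
    have m5 : |P2 β ε x * a| ≤ A * 1 := by
      rw [abs_mul]; exact mul_le_mul hP2b ha (abs_nonneg _) hA
    simp only [hQdef]
    linarith
  -- final computation
  have hxne : x ≠ 0 := hx0.ne'
  have hrpos : (0:ℝ) < x ^ (β - 3) := Real.rpow_pos_of_pos hx0 _
  have hEpos : (0:ℝ) < EE ε x := Real.exp_pos _
  have hG3 : |G3 β ε x| = x ^ (β - 3) * |P3 β ε x| * EE ε x := by
    simp only [G3]
    rw [abs_mul, abs_mul, abs_of_pos hrpos, abs_of_pos hEpos]
  have hhx : h x = x ^ β * EE ε x := by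
    rw [hh x hx0, hl x hx.le]; rfl
  have epow : x ^ β = x ^ (β - 3) * x ^ (3:ℕ) := by
    rw [show ((x:ℝ) ^ (3:ℕ)) = x ^ ((3:ℕ):ℝ) from (Real.rpow_natCast x 3).symm,
      ← Real.rpow_add hx0]
    norm_num
  rw [hG3, hhx, epow]
  have h3ne : (x:ℝ) ^ (3:ℕ) ≠ 0 := by positivity
  have : Q₁ * (x ^ (β - 3) * x ^ (3:ℕ) * EE ε x) / x ^ (3:ℕ)
      = Q₁ * (x ^ (β - 3) * EE ε x) := by
    field_simp
  rw [this]
  calc x ^ (β - 3) * |P3 β ε x| * EE ε x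
      = |P3 β ε x| * (x ^ (β - 3) * EE ε x) := by ring
    _ ≤ Q₁ * (x ^ (β - 3) * EE ε x) :=
        mul_le_mul_of_nonneg_right hP3b (by positivity)
    _ = Q₁ * (x ^ (β - 3) * EE ε x) := rfl
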